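/- Let λ > 0 and g₁, g₂ ∈ ℝ. For h > 0 let Ψ_h(R) = A_h·e^(√λ·R) + B_h·e^(−√λ·R) with A_h = (g₂ − g₁·e^(−√λ·h))/(2·sinh(√λ·h)) and B_h = (−g₂ + g₁·e^(√λ·h))/(2·sinh(√λ·h)). Then there exists C > 0 (depending only on λ, g₁, g₂) such that for all h with 0 < h ≤ 1, one has |Ψ_h'(h) − Ψ_h'(0) − (λ·h/2)·(g₁ + g₂)| ≤ C·h². -/

import Mathlib

/-!
Writing `s = √λ` and `u = s h`, the boundary data give
`Ψ_h'(h) - Ψ_h'(0) = s (g₁ + g₂) (cosh u - 1) / sinh u = s (g₁ + g₂) tanh (u / 2)`,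
while `λ h / 2 = s · u / 2`. The error is therefore `s (g₁ + g₂) (tanh x - x)` with `x = u / 2`,
and `x - x³/3 ≤ tanh x ≤ x` for `x ≥ 0` bounds it by `s⁴ |g₁ + g₂| h³ / 24`.
-/

open Real

lemma apply_zero_le_of_hasDerivAt_nonneg {f f' : ℝ → ℝ} (hf : ∀ x, HasDerivAt f (f' x) x)
    (hf' : ∀ x, 0 < x → 0 ≤ f' x) {x : ℝ} (hx : 0 ≤ x) : f 0 ≤ f x := by
  have hmono : MonotoneOn f (Set.Ici 0) := by
    refine monotoneOn_of_hasDerivWithinAt_nonneg (convex_Ici 0)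
      (fun y _ => (hf y).continuousAt.continuousWithinAt)
      (fun y _ => (hf y).hasDerivWithinAt) ?_
    rw [interior_Ici]
    exact fun y hy => hf' y hy
  exact hmono Set.self_mem_Ici hx hx

namespace Real

lemma sinh_le_mul_cosh {x : ℝ} (hx : 0 ≤ x) : sinh x ≤ x * cosh x := by
  have key := apply_zero_le_of_hasDerivAt_nonneg (f := fun x => x * cosh x - sinh x)
    (f' := fun x => x * sinh x)
    (fun x => (((hasDerivAt_id' x).mul (hasDerivAt_cosh x)).sub
      (hasDerivAt_sinh x)).congr_deriv (by ring))
    (fun x hx => mul_nonneg hx.le (sinh_nonneg_iff.2 hx.le)) hx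
  simp only [zero_mul, sinh_zero, sub_zero] at key
  linarith

lemma sub_cube_div_three_mul_cosh_le_sinh {x : ℝ} (hx : 0 ≤ x) :
    (x - x ^ 3 / 3) * cosh x ≤ sinh x := by
  have key := apply_zero_le_of_hasDerivAt_nonneg (f := fun x => sinh x - (x - x ^ 3 / 3) * cosh x)
    (f' := fun x => x * (x * cosh x - sinh x) + x ^ 3 / 3 * sinh x)
    (fun x => ((hasDerivAt_sinh x).sub (((hasDerivAt_id' x).sub
      ((hasDerivAt_pow 3 x).div_const 3)).mul (hasDerivAt_cosh x))).congr_deriv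
      (by simp only [Pi.sub_apply]; ring))
    (fun x hx => add_nonneg (mul_nonneg hx.le (sub_nonneg.2 (sinh_le_mul_cosh hx.le)))
      (mul_nonneg (by positivity) (sinh_nonneg_iff.2 hx.le)))
    hx
  simp only [sinh_zero, cosh_zero] at key
  linarith

lemma tanh_le_self {x : ℝ} (hx : 0 ≤ x) : tanh x ≤ x := by
  rw [tanh_eq_sinh_div_cosh, div_le_iff₀ (cosh_pos x)]
  exact sinh_le_mul_cosh hx

lemma sub_cube_div_three_le_tanh {x : ℝ} (hx : 0 ≤ x) : x - x ^ 3 / 3 ≤ tanh x := by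
  rw [tanh_eq_sinh_div_cosh, le_div_iff₀ (cosh_pos x)]
  exact sub_cube_div_three_mul_cosh_le_sinh hx

lemma abs_tanh_sub_self_le {x : ℝ} (hx : 0 ≤ x) : |tanh x - x| ≤ x ^ 3 / 3 := by
  rw [abs_sub_le_iff]
  constructor <;> linarith [tanh_le_self hx, sub_cube_div_three_le_tanh hx, pow_nonneg hx 3]

lemma tanh_half (x : ℝ) : tanh (x / 2) = (cosh x - 1) / sinh x := by
  obtain ⟨y, rfl⟩ : ∃ y, x = 2 * y := ⟨x / 2, by ring⟩
  rw [mul_div_cancel_left₀ y two_ne_zero, cosh_two_mul, sinh_two_mul, cosh_sq,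
    tanh_eq_sinh_div_cosh]
  rcases eq_or_ne (sinh y) 0 with hy | hy
  · simp [hy]
  · field_simp
    ring

end Real

lemma deriv_exp_combination (A B s R : ℝ) :
    deriv (fun R => A * exp (s * R) + B * exp (-(s * R))) R
      = s * (A * exp (s * R) - B * exp (-(s * R))) := by
  have h : HasDerivAt (fun R => A * exp (s * R) + B * exp (-(s * R)))
      (A * (exp (s * R) * (s * 1)) + B * (exp (-(s * R)) * -(s * 1))) R :=
    ((((hasDerivAt_id R).const_mul s).exp).const_mul A).add
      (((((hasDerivAt_id R).const_mul s).neg).exp).const_mul B)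
  rw [h.deriv]
  ring

lemma harmonicMode_flux_jump (g1 g2 : ℝ) {u : ℝ} (hu : u ≠ 0) :
    (g2 - g1 * exp (-u)) / (2 * sinh u) * (exp u - 1)
      - (-g2 + g1 * exp u) / (2 * sinh u) * (exp (-u) - 1)
      = (g1 + g2) * tanh (u / 2) := by
  have hsinh : sinh u ≠ 0 := sinh_ne_zero.2 hu
  have hexp : exp u * exp (-u) = 1 := by rw [← exp_add, add_neg_cancel, exp_zero]
  rw [tanh_half, cosh_eq]
  field_simp
  linear_combination (-2 * g1) * hexp

/-- mode-wise form of (3.10)-(3.11):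
Ψ_h'(h) - Ψ_h'(0) = (λh/2)(g₁+g₂) + O(h²). -/
theorem stmt_8 (lam g1 g2 : ℝ) (hlam : 0 < lam)
    (Psi : ℝ → ℝ → ℝ)
    (hPsi : ∀ h R : ℝ, Psi h R =
      (g2 - g1 * Real.exp (-(Real.sqrt lam * h))) / (2 * Real.sinh (Real.sqrt lam * h)) *
        Real.exp (Real.sqrt lam * R)
      + (-g2 + g1 * Real.exp (Real.sqrt lam * h)) / (2 * Real.sinh (Real.sqrt lam * h)) *
        Real.exp (-(Real.sqrt lam * R))) :
    ∃ C > 0, ∀ h : ℝ, 0 < h → h ≤ 1 →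
      |deriv (Psi h) h - deriv (Psi h) 0 - lam * h / 2 * (g1 + g2)| ≤ C * h ^ 2 := by
  set s := √lam
  have hs : 0 < s := sqrt_pos.2 hlam
  have hlam_eq : lam = s * s := (mul_self_sqrt hlam.le).symm
  refine ⟨s ^ 4 * |g1 + g2| / 24 + 1, by positivity, fun h hh hh1 => ?_⟩
  have hjump : deriv (Psi h) h - deriv (Psi h) 0 = s * (g1 + g2) * tanh (s * h / 2) := by
    rw [show Psi h = _ from funext (hPsi h), deriv_exp_combination, deriv_exp_combination,
      mul_assoc, ← harmonicMode_flux_jump g1 g2 (by positivity : s * h ≠ 0)]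
    simp only [mul_zero, neg_zero, exp_zero]
    ring
  have hx : 0 ≤ s * h / 2 := by positivity
  calc |deriv (Psi h) h - deriv (Psi h) 0 - lam * h / 2 * (g1 + g2)|
      = |s * (g1 + g2) * (tanh (s * h / 2) - s * h / 2)| := by
        rw [hjump, hlam_eq]
        ring_nf
    _ = s * |g1 + g2| * |tanh (s * h / 2) - s * h / 2| := by
        rw [abs_mul, abs_mul, abs_of_pos hs]
    _ ≤ s * |g1 + g2| * ((s * h / 2) ^ 3 / 3) := by gcongr; exact abs_tanh_sub_self_le hx
    _ = s ^ 4 * |g1 + g2| / 24 * h ^ 3 := by ring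
    _ ≤ s ^ 4 * |g1 + g2| / 24 * h ^ 2 := by
        gcongr ?_ * ?_
        exact pow_le_pow_of_le_one hh.le hh1 (by norm_num)
    _ ≤ (s ^ 4 * |g1 + g2| / 24 + 1) * h ^ 2 := by gcongr; linarith
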